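/- arXiv:1502.07229 — 3 statements merged into one kernel-verified Lean document; each statement's English description precedes it below -/
import Mathlib

section
/- Let H be a real Hilbert space, K : ℕ → H, and y : ℕ → ℝ with |y_i| ≤ M and ‖K_{t,j}‖ ≤ κ for all indices, where K_{t,j} ∈ H. Define f_1 = f_2 = 0 and for t ≥ 2, f_{t+1} = f_t - (γ_t/(t-1)) ∑_{j=1}^{t-1} (⟨f_t, K_{t,j}⟩ - y_t + y_j) K_{t,j}, with γ_t κ² ≤ 1. Then for every t, ‖f_t‖ ≤ 2M √(∑_{j=2}^{t-1} γ_j). -/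
/-!
Each OPERA step increases `‖f‖²` by at most `(2M)² γ_t`. Expanding the square, the quadratic
term is controlled by Cauchy–Schwarz and `γ_t κ² ≤ 1`, and what remains is a sum over `j` of
`2 a_j b_j - a_j²` with `b_j = y_j - y_t`, each term being at most `b_j² ≤ (2M)²`.
Summing these increments gives `‖f_t‖² ≤ (2M)² ∑_{j=2}^{t-1} γ_j`.
-/

open scoped BigOperators RealInnerProductSpace

open Finset

section Update

variable {H : Type*} [NormedAddCommGroup H] [InnerProductSpace ℝ H] {ι : Type*}

theorem norm_sum_smul_sq_le (s : Finset ι) (a : ι → ℝ) (v : ι → H) {κ : ℝ}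
    (hv : ∀ i ∈ s, ‖v i‖ ≤ κ) :
    ‖∑ i ∈ s, a i • v i‖ ^ 2 ≤ κ ^ 2 * (#s * ∑ i ∈ s, a i ^ 2) := by
  have hterm : ∀ i ∈ s, ‖a i • v i‖ ≤ |a i| * κ := fun i hi => by
    rw [norm_smul, Real.norm_eq_abs]
    exact mul_le_mul_of_nonneg_left (hv i hi) (abs_nonneg _)
  calc ‖∑ i ∈ s, a i • v i‖ ^ 2 ≤ (∑ i ∈ s, |a i| * κ) ^ 2 := by
        gcongr
        exact (norm_sum_le _ _).trans (sum_le_sum hterm)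
    _ = κ ^ 2 * (∑ i ∈ s, |a i|) ^ 2 := by rw [← sum_mul]; ring
    _ ≤ κ ^ 2 * (#s * ∑ i ∈ s, |a i| ^ 2) := by gcongr; exact sq_sum_le_card_mul_sum_sq
    _ = κ ^ 2 * (#s * ∑ i ∈ s, a i ^ 2) := by simp only [sq_abs]

theorem norm_sub_smul_sum_inner_add_smul_sq_le (s : Finset ι) (f : H) (v : ι → H)
    (b : ι → ℝ) {c κ : ℝ} (hc : 0 ≤ c) (hcκ : c * #s * κ ^ 2 ≤ 1)
    (hv : ∀ i ∈ s, ‖v i‖ ≤ κ) :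
    ‖f - c • ∑ i ∈ s, (⟪f, v i⟫ + b i) • v i‖ ^ 2 ≤ ‖f‖ ^ 2 + c * ∑ i ∈ s, b i ^ 2 := by
  set a : ι → ℝ := fun i => ⟪f, v i⟫ + b i
  have hinner : ⟪f, ∑ i ∈ s, a i • v i⟫ = ∑ i ∈ s, a i * (a i - b i) := by
    simp only [inner_sum, real_inner_smul_right, a, add_sub_cancel_right]
  have hquad : c ^ 2 * ‖∑ i ∈ s, a i • v i‖ ^ 2 ≤ c * ∑ i ∈ s, a i ^ 2 := by
    calc c ^ 2 * ‖∑ i ∈ s, a i • v i‖ ^ 2 ≤ c ^ 2 * (κ ^ 2 * (#s * ∑ i ∈ s, a i ^ 2)) := by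
          gcongr; exact norm_sum_smul_sq_le s a v hv
      _ = c * (c * #s * κ ^ 2) * ∑ i ∈ s, a i ^ 2 := by ring
      _ ≤ c * 1 * ∑ i ∈ s, a i ^ 2 := by gcongr
      _ = c * ∑ i ∈ s, a i ^ 2 := by ring
  have hterm : ∑ i ∈ s, (a i ^ 2 - 2 * (a i * (a i - b i))) ≤ ∑ i ∈ s, b i ^ 2 :=
    sum_le_sum fun i _ => by nlinarith [sq_nonneg (a i - b i)]
  calc ‖f - c • ∑ i ∈ s, a i • v i‖ ^ 2
        = ‖f‖ ^ 2 - 2 * c * ⟪f, ∑ i ∈ s, a i • v i⟫ + c ^ 2 * ‖∑ i ∈ s, a i • v i‖ ^ 2 := by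
        rw [norm_sub_sq_real, real_inner_smul_right, norm_smul, Real.norm_eq_abs, mul_pow,
          sq_abs]
        ring
    _ ≤ ‖f‖ ^ 2 + c * ∑ i ∈ s, (a i ^ 2 - 2 * (a i * (a i - b i))) := by
        rw [hinner, sum_sub_distrib, ← mul_sum]
        linarith
    _ ≤ ‖f‖ ^ 2 + c * ∑ i ∈ s, b i ^ 2 := by gcongr

theorem norm_opera_update_sq_le (s : Finset ι) (f : H) (v : ι → H) (y : ι → ℝ)
    {y₀ γ κ M : ℝ} (hγ : 0 ≤ γ) (hγκ : γ * κ ^ 2 ≤ 1) (hv : ∀ i ∈ s, ‖v i‖ ≤ κ)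
    (hy₀ : |y₀| ≤ M) (hy : ∀ i ∈ s, |y i| ≤ M) :
    ‖f - (γ / #s) • ∑ i ∈ s, (⟪f, v i⟫ - y₀ + y i) • v i‖ ^ 2 ≤ ‖f‖ ^ 2 + γ * (2 * M) ^ 2 := by
  have hcard : γ / #s * #s ≤ γ := by
    rcases (Nat.cast_nonneg (α := ℝ) #s).eq_or_lt with h | h
    · rw [← h]; simpa using hγ
    · rw [div_mul_cancel₀ _ h.ne']
  have hb : ∑ i ∈ s, (y i - y₀) ^ 2 ≤ #s * (2 * M) ^ 2 := by
    rw [← nsmul_eq_mul, ← sum_const]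
    refine sum_le_sum fun i hi => sq_le_sq' ?_ ?_ <;>
      linarith [abs_le.mp hy₀, abs_le.mp (hy i hi)]
  simp_rw [sub_add_eq_add_sub, add_sub_assoc]
  calc _ ≤ ‖f‖ ^ 2 + γ / #s * ∑ i ∈ s, (y i - y₀) ^ 2 :=
        norm_sub_smul_sum_inner_add_smul_sq_le s f v _ (by positivity)
          ((mul_le_mul_of_nonneg_right hcard (sq_nonneg κ)).trans hγκ) hv
    _ ≤ ‖f‖ ^ 2 + γ / #s * (#s * (2 * M) ^ 2) := by gcongr
    _ ≤ ‖f‖ ^ 2 + γ * (2 * M) ^ 2 := by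
        rw [← mul_assoc]; gcongr

end Update

theorem stmt4 {H : Type*} [NormedAddCommGroup H] [InnerProductSpace ℝ H]
    (M κ : ℝ) (K : ℕ → ℕ → H) (y : ℕ → ℝ) (γ : ℕ → ℝ)
    (hK : ∀ t j, ‖K t j‖ ≤ κ) (hy : ∀ i, |y i| ≤ M)
    (hγpos : ∀ t, 0 < γ t) (hγκ : ∀ t, γ t * κ ^ 2 ≤ 1)
    (f : ℕ → H) (hf1 : f 1 = 0) (hf2 : f 2 = 0)
    (hrec : ∀ t, 2 ≤ t →
      f (t + 1) = f t - (γ t / ((t : ℝ) - 1)) •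
        ∑ j ∈ Finset.Icc 1 (t - 1), ((⟪f t, K t j⟫ : ℝ) - y t + y j) • K t j) :
    ∀ t, 1 ≤ t → ‖f t‖ ≤ 2 * M * Real.sqrt (∑ j ∈ Finset.Icc 2 (t - 1), γ j) := by
  have hstep : ∀ t, 2 ≤ t → ‖f (t + 1)‖ ^ 2 ≤ ‖f t‖ ^ 2 + γ t * (2 * M) ^ 2 := fun t ht => by
    have hcard : ((#(Icc 1 (t - 1)) : ℕ) : ℝ) = (t : ℝ) - 1 := by
      rw [Nat.card_Icc, Nat.add_sub_cancel, Nat.cast_sub (by omega), Nat.cast_one]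
    rw [hrec t ht, ← hcard]
    exact norm_opera_update_sq_le _ _ _ _ (hγpos t).le (hγκ t) (fun j _ => hK t j) (hy t)
      (fun j _ => hy j)
  have hsq : ∀ t, 2 ≤ t → ‖f t‖ ^ 2 ≤ (2 * M) ^ 2 * ∑ j ∈ Ico 2 t, γ j := by
    intro t ht
    induction t, ht using Nat.le_induction with
    | base => simp [hf2]
    | succ t ht ih =>
      rw [sum_Ico_succ_top ht]
      linarith [hstep t ht]
  intro t ht
  have hM : 0 ≤ 2 * M := by linarith [(abs_nonneg _).trans (hy 0)]
  have hsum : 0 ≤ ∑ j ∈ Ico 2 t, γ j := sum_nonneg fun j _ => (hγpos j).le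
  rw [Icc_sub_one_right_eq_Ico_of_not_isMin (not_isMin_iff.2 ⟨0, ht⟩)]
  refine (pow_le_pow_iff_left₀ (norm_nonneg _) (by positivity) two_ne_zero).mp ?_
  rw [mul_pow, Real.sq_sqrt hsum]
  rcases ht.eq_or_lt with rfl | ht
  · simp [hf1]
  · exact hsq t ht
end

section
/- Let G be a Mercer kernel on X with RKHS H_G, and suppose the constant function 1_X is not in H_G. Let K be the pairwise kernel K((x¹,x²),(x̂¹,x̂²)) = ⟨G_{x¹} − G_{x²}, G_{x̂¹} − G_{x̂²}⟩_G with RKHS H_K. Then the map ℑ : H_G → H_K defined by ℑ(g)(x¹,x²) = g(x¹) − g(x²) is a bijection, and ‖ℑ(g)‖_K = ‖g‖_G for every g ∈ H_G. -/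
/-! The differences `G x¹ - G x²` and the sections `k (x¹, x²)` have the same Gram matrix, so
`k p ↦ G p.1 - G p.2` extends to a linear isometry `H_K ≃ H_G` once both families span dense
subspaces; `ℑ` is its inverse. Density of the differences is where `1_X ∉ H_G` enters: a vector
orthogonal to all differences represents a constant function, which has to vanish, so the vector
is orthogonal to every `G x` and is zero. -/

open scoped InnerProductSpace

open Set Submodule

theorem Finsupp.denseRange_linearCombination {R M ι : Type*} [Semiring R] [AddCommMonoid M]
    [Module R M] [TopologicalSpace M] [ContinuousAdd M] [ContinuousConstSMul R M] {u : ι → M}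
    (hu : (span R (range u)).topologicalClosure = ⊤) :
    DenseRange (Finsupp.linearCombination R u) := by
  rwa [DenseRange, ← LinearMap.coe_range, Finsupp.range_linearCombination,
    dense_iff_topologicalClosure_eq_top]

section

variable {𝕜 E F ι : Type*} [RCLike 𝕜]
  [NormedAddCommGroup E] [InnerProductSpace 𝕜 E] [NormedAddCommGroup F] [InnerProductSpace 𝕜 F]

theorem Submodule.mem_orthogonal_span_range_iff {f : ι → E} {g : E} :
    g ∈ (span 𝕜 (range f))ᗮ ↔ ∀ i, ⟪f i, g⟫_𝕜 = 0 := by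
  refine ⟨fun hg i => hg _ (subset_span ⟨i, rfl⟩), fun hg u hu => ?_⟩
  have hle : span 𝕜 (range f) ≤ LinearMap.ker (innerₛₗ 𝕜 g) :=
    span_le.mpr <| by rintro _ ⟨i, rfl⟩; exact inner_eq_zero_symm.mp (hg i)
  exact inner_eq_zero_symm.mp (hle hu)

theorem Submodule.topologicalClosure_span_range_eq_top_iff [CompleteSpace E] {f : ι → E} :
    (span 𝕜 (range f)).topologicalClosure = ⊤ ↔ ∀ g : E, (∀ i, ⟪f i, g⟫_𝕜 = 0) → g = 0 := by
  simp only [topologicalClosure_eq_top_iff, eq_bot_iff, SetLike.le_def,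
    mem_orthogonal_span_range_iff, mem_bot]

theorem topologicalClosure_span_range_sub_eq_top [CompleteSpace E] {X : Type*} {G : X → E}
    (hG : (span 𝕜 (range G)).topologicalClosure = ⊤)
    (hone : ¬ ∃ g : E, ∀ x, ⟪G x, g⟫_𝕜 = 1) :
    (span 𝕜 (range fun p : X × X => G p.1 - G p.2)).topologicalClosure = ⊤ := by
  rw [topologicalClosure_span_range_eq_top_iff] at hG ⊢
  intro g hg
  have hconst : ∀ x y, ⟪G x, g⟫_𝕜 = ⟪G y, g⟫_𝕜 := fun x y =>
    sub_eq_zero.mp <| by simpa only [inner_sub_left] using hg (x, y)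
  refine hG g fun x => by_contra fun hx => hone ⟨(⟪G x, g⟫_𝕜)⁻¹ • g, fun y => ?_⟩
  rw [inner_smul_right, hconst y x, inv_mul_cancel₀ hx]

theorem exists_linearIsometryEquiv_map_eq_of_inner_eq [CompleteSpace E] [CompleteSpace F]
    {u : ι → E} {v : ι → F}
    (hu : (span 𝕜 (range u)).topologicalClosure = ⊤)
    (hv : (span 𝕜 (range v)).topologicalClosure = ⊤)
    (h : ∀ i j, ⟪u i, u j⟫_𝕜 = ⟪v i, v j⟫_𝕜) :
    ∃ e : E ≃ₗᵢ[𝕜] F, ∀ i, e (u i) = v i := by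
  have huD := Finsupp.denseRange_linearCombination hu
  have hvD := Finsupp.denseRange_linearCombination hv
  have hnorm (c : ι →₀ 𝕜) :
      ‖Finsupp.linearCombination 𝕜 v (LinearEquiv.refl 𝕜 _ c)‖ =
        ‖Finsupp.linearCombination 𝕜 u c‖ := by
    simp only [LinearEquiv.refl_apply, norm_eq_sqrt_re_inner (𝕜 := 𝕜),
      Finsupp.linearCombination_apply, Finsupp.sum_inner, Finsupp.inner_sum, inner_smul_left,
      inner_smul_right, h]
  refine ⟨(LinearEquiv.refl 𝕜 _).extendOfIsometry _ _ huD hvD hnorm, fun i => ?_⟩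
  simpa using LinearEquiv.extendOfIsometry_eq _ _ _ huD hvD hnorm (Finsupp.single i 1)

end

-- reopened so that the bare `⟪x, y⟫` of the statement is not parsed as the `⟪x, y⟫_𝕜` notation
open scoped RealInnerProductSpace

/-- RKHSs are modeled abstractly: `HG` is a Hilbert space with feature map `G : X → HG`
whose kernel sections span a dense subspace, an element `g : HG` representing the
function `x ↦ ⟪G x, g⟫` (reproducing property); similarly `HK` with feature map
`k : X × X → HK` for the pairwise kernel
`K((x¹,x²),(x̂¹,x̂²)) = ⟪G x¹ − G x², G x̂¹ − G x̂²⟫`. -/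
theorem stmt6 {X HG HK : Type*}
    [NormedAddCommGroup HG] [InnerProductSpace ℝ HG] [CompleteSpace HG]
    [NormedAddCommGroup HK] [InnerProductSpace ℝ HK] [CompleteSpace HK]
    (G : X → HG) (k : X × X → HK)
    (hGdense : (Submodule.span ℝ (Set.range G)).topologicalClosure = ⊤)
    (hKdense : (Submodule.span ℝ (Set.range k)).topologicalClosure = ⊤)
    (hker : ∀ p q : X × X, (⟪k p, k q⟫ : ℝ) = ⟪G p.1 - G p.2, G q.1 - G q.2⟫)
    (hone : ¬ ∃ g : HG, ∀ x : X, (⟪G x, g⟫ : ℝ) = 1) :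
    ∃ ℑ : HG → HK,
      (∀ (g : HG) (p : X × X), (⟪k p, ℑ g⟫ : ℝ) = ⟪G p.1, g⟫ - ⟪G p.2, g⟫) ∧
        Function.Bijective ℑ ∧ ∀ g : HG, ‖ℑ g‖ = ‖g‖ := by
  obtain ⟨e, he⟩ := exists_linearIsometryEquiv_map_eq_of_inner_eq hKdense
    (topologicalClosure_span_range_sub_eq_top hGdense hone) hker
  refine ⟨e.symm, fun g p => ?_, e.symm.bijective, e.symm.norm_map⟩
  rw [← e.inner_map_eq_flip, he, inner_sub_left]
end

section
/- Let G be a Mercer kernel on X whose RKHS H_G contains the constant function 1_X. Let I_G = span{1_X} and I_G^⊥ = {g ∈ H_G : ⟨g, 1_X⟩_G = 0}. Let K be the pairwise kernel K((x¹,x²),(x̂¹,x̂²)) = ⟨G_{x¹} − G_{x²}, G_{x̂¹} − G_{x̂²}⟩_G with RKHS H_K. Then the map ℑ : I_G^⊥ → H_K, ℑ(g)(x¹,x²) = g(x¹) − g(x²), is a bijection satisfying ‖ℑ(g)‖_K = ‖g‖_G. -/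
/-! The kernel identity says that `k p ↦ G p.1 - G p.2` preserves inner products, so it extends
from the dense span of the `k p` to a linear isometry `Φ : H_K → H_G`, whose range is orthogonal
to `1_X`. The map `ℑ` is the adjoint `Φ†`, since `⟪k p, Φ† g⟫ = ⟪Φ (k p), g⟫ = g(p.1) - g(p.2)`.
For `g ∈ I_G^⊥`, the vector `g - Φ (Φ† g)` is orthogonal to `1_X` and to every `G x - G y`, i.e.
it is a constant function orthogonal to the constants, so it vanishes. Hence `Φ` and `Φ†` are
mutually inverse isometries between `H_K` and `I_G^⊥`. -/

open scoped InnerProductSpace InnerProduct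

section InnerProductSpace

variable {ι 𝕜 E F : Type*} [RCLike 𝕜]
  [NormedAddCommGroup E] [InnerProductSpace 𝕜 E]
  [NormedAddCommGroup F] [InnerProductSpace 𝕜 F]

theorem eq_zero_of_inner_eq_zero_of_dense_span [CompleteSpace E] {v : ι → E}
    (hv : (Submodule.span 𝕜 (Set.range v)).topologicalClosure = ⊤) {x : E}
    (h : ∀ i, ⟪v i, x⟫_𝕜 = 0) : x = 0 := by
  have hortho : Submodule.span 𝕜 (Set.range v) ⟂ 𝕜 ∙ x :=
    Submodule.isOrtho_span.mpr (by rintro _ ⟨i, rfl⟩ _ rfl; exact h i)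
  have := Submodule.isOrtho_iff_le.mp hortho.symm
  rw [Submodule.topologicalClosure_eq_top_iff.mp hv] at this
  simpa using this (Submodule.mem_span_singleton_self x)

theorem inner_linearCombination_eq_of_inner_eq {u : ι → E} {v : ι → F}
    (h : ∀ i j, ⟪u i, u j⟫_𝕜 = ⟪v i, v j⟫_𝕜) (a b : ι →₀ 𝕜) :
    ⟪Finsupp.linearCombination 𝕜 u a, Finsupp.linearCombination 𝕜 u b⟫_𝕜 =
      ⟪Finsupp.linearCombination 𝕜 v a, Finsupp.linearCombination 𝕜 v b⟫_𝕜 := by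
  simp [Finsupp.linearCombination_apply, Finsupp.sum, sum_inner, inner_sum, inner_smul_left,
    inner_smul_right, h]

theorem exists_linearIsometry_of_inner_eq [CompleteSpace F] {u : ι → E} {v : ι → F}
    (hu : (Submodule.span 𝕜 (Set.range u)).topologicalClosure = ⊤)
    (h : ∀ i j, ⟪u i, u j⟫_𝕜 = ⟪v i, v j⟫_𝕜) :
    ∃ Φ : E →ₗᵢ[𝕜] F, ∀ i, Φ (u i) = v i := by
  set e := Finsupp.linearCombination 𝕜 u
  set f := Finsupp.linearCombination 𝕜 v
  have hnorm (a : ι →₀ 𝕜) : ‖f a‖ = ‖e a‖ := by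
    rw [@norm_eq_sqrt_re_inner 𝕜, @norm_eq_sqrt_re_inner 𝕜,
      inner_linearCombination_eq_of_inner_eq h]
  have hdense : DenseRange e := by
    rw [DenseRange, ← LinearMap.coe_range, Finsupp.range_linearCombination,
      Submodule.dense_iff_topologicalClosure_eq_top]
    exact hu
  have hext (a : ι →₀ 𝕜) : f.extendOfNorm e (e a) = f a :=
    LinearMap.extendOfNorm_eq hdense ⟨1, fun a => by rw [hnorm, one_mul]⟩ a
  have hisom (x : E) : ‖f.extendOfNorm e x‖ = ‖x‖ := by
    refine hdense.induction (fun _ ⟨a, ha⟩ => ?_) (isClosed_eq (by fun_prop) continuous_norm) x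
    rw [← ha, hext, hnorm]
  refine ⟨⟨(f.extendOfNorm e).toLinearMap, hisom⟩, fun i => ?_⟩
  simpa [e, f] using hext (Finsupp.single i 1)

theorem LinearIsometry.adjoint_apply_map [CompleteSpace E] [CompleteSpace F] (Φ : E →ₗᵢ[𝕜] F)
    (x : E) : (Φ.toContinuousLinearMap†) (Φ x) = x := by
  have := (ContinuousLinearMap.norm_map_iff_adjoint_comp_self Φ.toContinuousLinearMap).mp
    Φ.norm_map
  exact congr($this x)

theorem eq_inner_smul_of_forall_inner_eq [CompleteSpace E] {G : ι → E}
    (hG : (Submodule.span 𝕜 (Set.range G)).topologicalClosure = ⊤) {c : E}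
    (hc : ∀ i, ⟪G i, c⟫_𝕜 = 1) {h : E} {i : ι} (hh : ∀ j, ⟪G j, h⟫_𝕜 = ⟪G i, h⟫_𝕜) :
    h = ⟪G i, h⟫_𝕜 • c := by
  rw [← sub_eq_zero]
  refine eq_zero_of_inner_eq_zero_of_dense_span hG fun j => ?_
  rw [inner_sub_right, inner_smul_right, hc, mul_one, hh, sub_self]

theorem eq_zero_of_forall_inner_sub_eq_zero [CompleteSpace E] {G : ι → E}
    (hG : (Submodule.span 𝕜 (Set.range G)).topologicalClosure = ⊤) {c : E}
    (hc : ∀ i, ⟪G i, c⟫_𝕜 = 1) {h : E} (hh : ∀ i j, ⟪G i - G j, h⟫_𝕜 = 0)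
    (hhc : ⟪h, c⟫_𝕜 = 0) : h = 0 := by
  refine eq_zero_of_inner_eq_zero_of_dense_span hG fun i => ?_
  have hconst : h = ⟪G i, h⟫_𝕜 • c := eq_inner_smul_of_forall_inner_eq hG hc fun j => by
    rw [← sub_eq_zero, ← inner_sub_left, hh]
  have hzero : h = 0 := by
    rw [← inner_self_eq_zero (𝕜 := 𝕜)]
    nth_rewrite 1 [hconst]
    rw [inner_smul_left, ← inner_conj_symm c h, hhc, map_zero, mul_zero]
  rw [hzero, inner_zero_right]

end InnerProductSpace

open scoped RealInnerProductSpace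

section PairwiseKernel

variable {X HG HK : Type*}
  [NormedAddCommGroup HG] [InnerProductSpace ℝ HG] [CompleteSpace HG]
  [NormedAddCommGroup HK] [InnerProductSpace ℝ HK] [CompleteSpace HK]
  {G : X → HG} {k : X × X → HK} {c : HG} {Φ : HK →ₗᵢ[ℝ] HG}

theorem inner_map_eq_zero_of_map_eq_sub
    (hK : (Submodule.span ℝ (Set.range k)).topologicalClosure = ⊤)
    (hc : ∀ x, ⟪G x, c⟫ = 1) (hΦ : ∀ p, Φ (k p) = G p.1 - G p.2) (u : HK) :
    ⟪Φ u, c⟫ = 0 := by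
  have hadj : (Φ.toContinuousLinearMap†) c = 0 := by
    refine eq_zero_of_inner_eq_zero_of_dense_span hK fun p => ?_
    rw [ContinuousLinearMap.adjoint_inner_right, LinearIsometry.coe_toContinuousLinearMap, hΦ,
      inner_sub_left, hc, hc, sub_self]
  rw [← LinearIsometry.coe_toContinuousLinearMap, ← ContinuousLinearMap.adjoint_inner_right,
    hadj, inner_zero_right]

theorem map_adjoint_eq_self_of_map_eq_sub
    (hG : (Submodule.span ℝ (Set.range G)).topologicalClosure = ⊤)
    (hK : (Submodule.span ℝ (Set.range k)).topologicalClosure = ⊤)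
    (hc : ∀ x, ⟪G x, c⟫ = 1) (hΦ : ∀ p, Φ (k p) = G p.1 - G p.2) {g : HG} (hg : ⟪g, c⟫ = 0) :
    Φ ((Φ.toContinuousLinearMap†) g) = g := by
  rw [eq_comm, ← sub_eq_zero]
  refine eq_zero_of_forall_inner_sub_eq_zero hG hc (fun x y => ?_) ?_
  · rw [← hΦ (x, y), ← LinearIsometry.coe_toContinuousLinearMap,
      ← ContinuousLinearMap.adjoint_inner_right, map_sub,
      LinearIsometry.coe_toContinuousLinearMap, Φ.adjoint_apply_map, sub_self,
      inner_zero_right]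
  · rw [inner_sub_left, hg, inner_map_eq_zero_of_map_eq_sub hK hc hΦ, sub_zero]

end PairwiseKernel

/-- RKHSs are modeled abstractly as in the companion statement: `HG` with feature map
`G : X → HG` (dense kernel sections, `g` represents `x ↦ ⟪G x, g⟫`), `HK` with feature
map `k : X × X → HK` for the pairwise kernel. Here the constant function `1_X` belongs
to `H_G` and is represented by `c` (i.e. `⟪G x, c⟫ = 1` for all `x`); `ℑ` is defined on
the orthogonal complement `I_G^⊥ = {g : ⟪g, c⟫ = 0}` of `span{1_X}`. -/
theorem stmt7 {X HG HK : Type*}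
    [NormedAddCommGroup HG] [InnerProductSpace ℝ HG] [CompleteSpace HG]
    [NormedAddCommGroup HK] [InnerProductSpace ℝ HK] [CompleteSpace HK]
    (G : X → HG) (k : X × X → HK)
    (hGdense : (Submodule.span ℝ (Set.range G)).topologicalClosure = ⊤)
    (hKdense : (Submodule.span ℝ (Set.range k)).topologicalClosure = ⊤)
    (hker : ∀ p q : X × X, (⟪k p, k q⟫ : ℝ) = ⟪G p.1 - G p.2, G q.1 - G q.2⟫)
    (c : HG) (hc : ∀ x : X, (⟪G x, c⟫ : ℝ) = 1) :
    ∃ ℑ : {g : HG // (⟪g, c⟫ : ℝ) = 0} → HK,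
      (∀ (g : {g : HG // (⟪g, c⟫ : ℝ) = 0}) (p : X × X),
          (⟪k p, ℑ g⟫ : ℝ) = ⟪G p.1, (g : HG)⟫ - ⟪G p.2, (g : HG)⟫) ∧
        Function.Bijective ℑ ∧ ∀ g : {g : HG // (⟪g, c⟫ : ℝ) = 0}, ‖ℑ g‖ = ‖(g : HG)‖ := by
  obtain ⟨Φ, hΦ⟩ := exists_linearIsometry_of_inner_eq hKdense hker
  have hsection (g : {g : HG // ⟪g, c⟫ = 0}) : Φ ((Φ.toContinuousLinearMap†) g) = g :=
    map_adjoint_eq_self_of_map_eq_sub hGdense hKdense hc hΦ g.2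
  refine ⟨fun g => (Φ.toContinuousLinearMap†) g, fun g p => ?_, ?_,
    fun g => by rw [← Φ.norm_map, hsection]⟩
  · rw [ContinuousLinearMap.adjoint_inner_right, LinearIsometry.coe_toContinuousLinearMap, hΦ,
      inner_sub_left]
  · refine Function.bijective_iff_has_inverse.mpr
      ⟨fun u => ⟨Φ u, inner_map_eq_zero_of_map_eq_sub hKdense hc hΦ u⟩,
        fun g => Subtype.ext (hsection g), fun u => Φ.adjoint_apply_map u⟩
end
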